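/- Normalization of the adapted kernel (Appendix A of the paper): Let ℏ > 0 and B ∈ GL(2d,R), and define K(ρ₀) := 2^d ∫_{R^{2d}} e^{−2iπ⟨ρ₁,ρ₀⟩} G(ρ₁) G(πℏ · B J Bᵀ ρ₁ − ρ₀) dρ₁. Then ∫_{R^{2d}} K(ρ₀) dρ₀ = 1. -/

import Mathlib

open MeasureTheory Matrix

noncomputable section

/-- The standard symplectic matrix `J = (0, -I; I, 0)` on `ℝ^{2d}`. -/
def Jmat (d : ℕ) : Matrix (Fin d ⊕ Fin d) (Fin d ⊕ Fin d) ℝ :=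
  Matrix.fromBlocks 0 (-1) 1 0

/-- Euclidean inner product on `ℝ^{2d}`. -/
def ip {d : ℕ} (v w : (Fin d ⊕ Fin d) → ℝ) : ℝ := ∑ i, v i * w i

/-- The Gaussian `G(w) = exp(-π ‖w‖²)` on `ℝ^{2d}`. -/
def Gfun {d : ℕ} (w : (Fin d ⊕ Fin d) → ℝ) : ℝ := Real.exp (-(Real.pi * ∑ i, (w i) ^ 2))

/-- The kernel `K(ρ₀) = 2^d ∫ e^{-2iπ⟨ρ₁,ρ₀⟩} G(ρ₁) G(πℏ BJBᵀ ρ₁ − ρ₀) dρ₁`. -/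
def Kker (d : ℕ) (ℏ : ℝ) (B : Matrix (Fin d ⊕ Fin d) (Fin d ⊕ Fin d) ℝ)
    (ρ₀ : (Fin d ⊕ Fin d) → ℝ) : ℂ :=
  (2 : ℝ) ^ d *
    ∫ ρ₁ : (Fin d ⊕ Fin d) → ℝ,
      Complex.exp (-(2 * Real.pi * Complex.I) * (ip ρ₁ ρ₀ : ℝ)) *
        (Gfun ρ₁ : ℝ) *
        ((Gfun ((Real.pi * ℏ) • ((B * Jmat d * Bᵀ).mulVec ρ₁) - ρ₀) : ℝ) : ℂ)

/-!
Write `M = πℏ BJBᵀ`. Since `J` is antisymmetric so is `M`, hence `⟨ρ₁, M ρ₁⟩ = 0`. After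
exchanging the integrals (the integrand is dominated by `G(ρ₁) G(Mρ₁ - ρ₀)`, integrable by a
shear change of variables), the substitution `u = Mρ₁ - ρ₀` turns the `ρ₀`-integral into the
Fourier transform of the self-dual Gaussian, `G(ρ₁)`. What is left is
`2^d ∫ G(ρ₁)² dρ₁ = 2^d · 2^{-d} = 1`.
-/

open Real Complex

section Skew

variable {n R : Type*} [Fintype n] [CommRing R]

theorem Matrix.dotProduct_mulVec_self_eq_zero_of_transpose_eq_neg [IsAddTorsionFree R]
    {A : Matrix n n R} (hA : Aᵀ = -A) (v : n → R) : v ⬝ᵥ A *ᵥ v = 0 := by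
  refine self_eq_neg.mp ?_
  calc v ⬝ᵥ A *ᵥ v = Aᵀ *ᵥ v ⬝ᵥ v := by rw [dotProduct_mulVec, mulVec_transpose]
    _ = -(v ⬝ᵥ A *ᵥ v) := by rw [hA, neg_mulVec, neg_dotProduct, dotProduct_comm]

theorem Matrix.transpose_conj_eq_neg_of_transpose_eq_neg {A : Matrix n n R} (hA : Aᵀ = -A)
    (B : Matrix n n R) : (B * A * Bᵀ)ᵀ = -(B * A * Bᵀ) := by
  rw [transpose_mul, transpose_mul, transpose_transpose, hA, Matrix.neg_mul, Matrix.mul_neg,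
    Matrix.mul_assoc]

end Skew

theorem Jmat_transpose (d : ℕ) : (Jmat d)ᵀ = -Jmat d := by
  simp [Jmat, fromBlocks_transpose, fromBlocks_neg]

abbrev PhaseSpace (d : ℕ) := Fin d ⊕ Fin d → ℝ

variable {d : ℕ}

theorem ip_eq_dotProduct (v w : PhaseSpace d) : ip v w = v ⬝ᵥ w := rfl

@[fun_prop]
theorem measurable_Gfun : Measurable (Gfun (d := d)) := by
  unfold Gfun
  fun_prop

theorem Gfun_nonneg (w : PhaseSpace d) : 0 ≤ Gfun w := (Real.exp_pos _).le

theorem ofReal_Gfun (w : PhaseSpace d) : (Gfun w : ℂ) = cexp (-π * ∑ i, (w i : ℂ) ^ 2) := by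
  simp [Gfun]

theorem integrable_Gfun : Integrable (Gfun (d := d)) := by
  have := (GaussianFourier.integrable_cexp_neg_mul_sum_add (ι := Fin d ⊕ Fin d) (b := π)
    (by simpa using pi_pos) 0).re
  simpa only [Pi.zero_apply, zero_mul, Finset.sum_const_zero, add_zero, ← ofReal_Gfun,
    RCLike.re_to_complex, ofReal_re] using this

theorem integral_cexp_mul_Gfun (ξ : PhaseSpace d) :
    ∫ u, cexp (2 * π * I * ip ξ u) * Gfun u = Gfun ξ := by
  have hπ : (π : ℂ) ≠ 0 := ofReal_ne_zero.mpr pi_ne_zero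
  have hG : ∀ u : PhaseSpace d, cexp (2 * π * I * ip ξ u) * Gfun u =
      cexp (-π * ∑ i, (u i : ℂ) ^ 2 + ∑ i, 2 * π * I * ξ i * u i) := by
    intro u
    rw [ofReal_Gfun, ← Complex.exp_add, add_comm]
    congr 2
    push_cast [ip, Finset.mul_sum]
    exact Finset.sum_congr rfl fun i _ => by ring
  simp_rw [hG, GaussianFourier.integral_cexp_neg_mul_sum_add (b := π) (by simpa using pi_pos),
    div_self hπ, one_cpow, one_mul, ofReal_Gfun, Finset.sum_div, Finset.mul_sum]
  congr 1
  refine Finset.sum_congr rfl fun i _ => ?_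
  field_simp
  ring_nf
  simp only [I_sq]
  ring

theorem integral_Gfun_sq : ∫ w : PhaseSpace d, ((Gfun w ^ 2 : ℝ) : ℂ) = 2⁻¹ ^ d := by
  have hG : ∀ w : PhaseSpace d, ((Gfun w ^ 2 : ℝ) : ℂ) =
      cexp (-(2 * π) * ∑ i, (w i : ℂ) ^ 2 + ∑ i, (0 : ℂ) * w i) := by
    intro w
    rw [ofReal_pow, ofReal_Gfun, ← Complex.exp_nat_mul]
    simp only [zero_mul, Finset.sum_const_zero, add_zero]
    ring_nf
  simp_rw [hG, GaussianFourier.integral_cexp_neg_mul_sum_add (b := 2 * π) (by simp [pi_pos])]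
  have hcard : ((Fintype.card (Fin d ⊕ Fin d) : ℂ) / 2) = (d : ℕ) := by
    simp only [Fintype.card_sum, Fintype.card_fin]
    push_cast
    ring
  have hhalf : (π : ℂ) / (2 * π) = 2⁻¹ := by field_simp
  simp only [hcard, hhalf, cpow_natCast, zero_pow two_ne_zero,
    Finset.sum_const_zero, zero_div, Complex.exp_zero, mul_one]

theorem measurePreserving_shear {G : Type*} [MeasurableSpace G] [AddGroup G] [MeasurableAdd₂ G]
    [MeasurableNeg G] {μ : Measure G} [SFinite μ] [μ.IsAddLeftInvariant] [μ.IsNegInvariant]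
    {m : G → G} (hm : Measurable m) :
    MeasurePreserving (fun p : G × G => (p.2, m p.2 - p.1)) (μ.prod μ) (μ.prod μ) := by
  refine (MeasurePreserving.skew_product (MeasurePreserving.id μ) (g := fun a c => m a - c)
    ((hm.comp measurable_fst).sub measurable_snd)
    (Filter.Eventually.of_forall fun a => Measure.map_sub_left_eq_self μ (m a))).comp
    Measure.measurePreserving_swap

def kernelIntegrand (m : PhaseSpace d → PhaseSpace d) (ρ₀ ρ₁ : PhaseSpace d) : ℂ :=
  cexp (-(2 * π * I) * (ip ρ₁ ρ₀ : ℝ)) * (Gfun ρ₁ : ℝ) * ((Gfun (m ρ₁ - ρ₀) : ℝ) : ℂ)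

variable {m : PhaseSpace d → PhaseSpace d}

theorem norm_kernelIntegrand (ρ₀ ρ₁ : PhaseSpace d) :
    ‖kernelIntegrand m ρ₀ ρ₁‖ = Gfun ρ₁ * Gfun (m ρ₁ - ρ₀) := by
  have hphase : ‖cexp (-(2 * π * I) * (ip ρ₁ ρ₀ : ℝ))‖ = 1 := by
    rw [show -(2 * π * I) * (ip ρ₁ ρ₀ : ℝ) = ((-(2 * π * ip ρ₁ ρ₀) : ℝ) : ℂ) * I by
      push_cast; ring]
    exact norm_exp_ofReal_mul_I _
  rw [kernelIntegrand, norm_mul, norm_mul, hphase, one_mul, norm_real, norm_real,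
    Real.norm_of_nonneg (Gfun_nonneg _), Real.norm_of_nonneg (Gfun_nonneg _)]

theorem integrable_kernelIntegrand (hm : Measurable m) :
    Integrable (Function.uncurry (kernelIntegrand m)) (volume.prod volume) := by
  have hmeas : Measurable (Function.uncurry (kernelIntegrand m)) := by
    unfold kernelIntegrand ip
    fun_prop
  refine Integrable.mono' ?_ hmeas.aestronglyMeasurable
    (Filter.Eventually.of_forall fun p => (norm_kernelIntegrand p.1 p.2).le)
  exact (measurePreserving_shear hm).integrable_comp_of_integrable
    (integrable_Gfun.mul_prod integrable_Gfun)

theorem integral_kernelIntegrand_left {ρ₁ : PhaseSpace d} (hskew : ip ρ₁ (m ρ₁) = 0) :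
    ∫ ρ₀, kernelIntegrand m ρ₀ ρ₁ = ((Gfun ρ₁ ^ 2 : ℝ) : ℂ) := by
  have hshift : ∀ ρ₀, kernelIntegrand m ρ₀ ρ₁ =
      Gfun ρ₁ * (cexp (2 * π * I * ip ρ₁ (m ρ₁ - ρ₀)) * Gfun (m ρ₁ - ρ₀)) := by
    intro ρ₀
    have hip : ip ρ₁ (m ρ₁ - ρ₀) = -ip ρ₁ ρ₀ := by
      rw [ip_eq_dotProduct, ip_eq_dotProduct, dotProduct_sub, ← ip_eq_dotProduct, hskew,
        zero_sub]
    rw [kernelIntegrand, hip]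
    push_cast
    ring_nf
  simp_rw [hshift]
  rw [integral_sub_left_eq_self (fun u => (Gfun ρ₁ : ℂ) * (cexp (2 * π * I * ip ρ₁ u) * Gfun u)),
    integral_const_mul, integral_cexp_mul_Gfun]
  push_cast
  ring

theorem integral_integral_kernelIntegrand (hm : Measurable m) (hskew : ∀ ρ, ip ρ (m ρ) = 0) :
    ∫ ρ₀, ∫ ρ₁, kernelIntegrand m ρ₀ ρ₁ = 2⁻¹ ^ d := by
  rw [integral_integral_swap (integrable_kernelIntegrand hm)]
  simp_rw [integral_kernelIntegrand_left (hskew _)]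
  exact integral_Gfun_sq

theorem adapted_kernel_normalization_general
    (d : ℕ) (ℏ : ℝ)
    (B : Matrix (Fin d ⊕ Fin d) (Fin d ⊕ Fin d) ℝ) :
    (∫ ρ₀ : (Fin d ⊕ Fin d) → ℝ, Kker d ℏ B ρ₀) = 1 := by
  set m : PhaseSpace d → PhaseSpace d := fun ρ => (π * ℏ) • ((B * Jmat d * Bᵀ) *ᵥ ρ)
  have hskew : ∀ ρ, ip ρ (m ρ) = 0 := fun ρ => by
    rw [ip_eq_dotProduct, dotProduct_smul,
      dotProduct_mulVec_self_eq_zero_of_transpose_eq_neg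
        (transpose_conj_eq_neg_of_transpose_eq_neg (Jmat_transpose d) B), smul_zero]
  have hm : Measurable m := by fun_prop
  calc ∫ ρ₀, Kker d ℏ B ρ₀ = ((2 : ℝ) ^ d : ℂ) * ∫ ρ₀, ∫ ρ₁, kernelIntegrand m ρ₀ ρ₁ :=
        integral_const_mul _ _
    _ = 1 := by
      rw [integral_integral_kernelIntegrand hm hskew]
      push_cast
      rw [← mul_pow]
      norm_num

/-- **Normalization of the adapted kernel**: `∫ K(ρ₀) dρ₀ = 1`. -/
theorem adapted_kernel_normalization
    (d : ℕ) (ℏ : ℝ) (hℏ : 0 < ℏ)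
    (B : Matrix (Fin d ⊕ Fin d) (Fin d ⊕ Fin d) ℝ) (hB : IsUnit B.det) :
    (∫ ρ₀ : (Fin d ⊕ Fin d) → ℝ, Kker d ℏ B ρ₀) = 1 :=
  adapted_kernel_normalization_general d ℏ B
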